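/- arXiv:1508.05547 — 5 statements merged into one kernel-verified Lean document; each statement's English description precedes it below -/
import Mathlib

section
/- Let a ≥ 2 and n ≥ 1 be natural numbers, let m ≥ 2, and let l_1, ..., l_m ≥ 1 be integers such that the numbers p_i = a^{l_i} n + 1 are distinct primes for i = 1, ..., m. Then N = p_1 p_2 ⋯ p_m is a radimichael number, i.e., rad(φ(N)) divides N − 1. -/
/-- The radical of a natural number: the product of its distinct prime factors,
i.e. its largest squarefree divisor. -/
def rad (n : ℕ) : ℕ := ∏ p ∈ n.primeFactors, p

lemma totient_prod_primes {ι : Type*} [DecidableEq ι] (s : Finset ι) (f : ι → ℕ)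
    (hp : ∀ i ∈ s, Nat.Prime (f i)) (hinj : ∀ i ∈ s, ∀ j ∈ s, f i = f j → i = j) :
    Nat.totient (∏ i ∈ s, f i) = ∏ i ∈ s, (f i - 1) := by
  induction s using Finset.induction_on with
  | empty => simp
  | @insert i s hi ih =>
    rw [Finset.prod_insert hi, Finset.prod_insert hi]
    have hcop : Nat.Coprime (f i) (∏ j ∈ s, f j) := by
      apply Nat.Coprime.prod_right
      intro j hj
      have hfi := hp i (Finset.mem_insert_self i s)
      have hfj := hp j (Finset.mem_insert_of_mem hj)
      rw [Nat.coprime_primes hfi hfj]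
      intro h
      exact hi (hinj i (Finset.mem_insert_self i s) j (Finset.mem_insert_of_mem hj) h ▸ hj)
    rw [Nat.totient_mul hcop, Nat.totient_prime (hp i (Finset.mem_insert_self i s)),
      ih (fun j hj => hp j (Finset.mem_insert_of_mem hj))
        (fun j hj k hk => hinj j (Finset.mem_insert_of_mem hj) k (Finset.mem_insert_of_mem hk))]

/-- If `p i = a ^ (l i) * n + 1` are distinct primes (`a ≥ 2`, `n ≥ 1`, `l i ≥ 1`,
`m ≥ 2`), then `N = ∏ p i` is a radimichael number: `rad (φ N) ∣ N - 1`. -/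
theorem radimichael_of_tuple (a n m : ℕ) (ha : 2 ≤ a) (hn : 1 ≤ n) (hm : 2 ≤ m)
    (l : Fin m → ℕ) (hl : ∀ i, 1 ≤ l i)
    (hprime : ∀ i, Nat.Prime (a ^ l i * n + 1))
    (hdist : Function.Injective fun i => a ^ l i * n + 1) :
    rad (Nat.totient (∏ i, (a ^ l i * n + 1))) ∣ (∏ i, (a ^ l i * n + 1)) - 1 := by
  set N := ∏ i, (a ^ l i * n + 1) with hN
  have ha0 : 0 < a := by omega
  have han : 0 < a * n := Nat.mul_pos ha0 hn
  -- totient = product of a^(l i) * n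
  have htot : Nat.totient N = ∏ i, (a ^ l i * n) := by
    rw [hN, totient_prod_primes _ _ (fun i _ => hprime i)
      (fun i _ j _ h => hdist h)]
    simp
  -- a * n divides N - 1
  have hdvd_each : ∀ i, a * n ∣ a ^ l i * n := fun i =>
    Nat.mul_dvd_mul (dvd_pow_self a (by have := hl i; omega)) dvd_rfl
  have hNmod : (N : ZMod (a * n)) = ((1 : ℕ) : ZMod (a * n)) := by
    rw [hN, Nat.cast_prod]
    have h1 : ∀ i ∈ Finset.univ, ((a ^ l i * n + 1 : ℕ) : ZMod (a * n)) = 1 := by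
      intro i _
      have h0 : ((a ^ l i * n : ℕ) : ZMod (a * n)) = 0 :=
        (ZMod.natCast_eq_zero_iff _ _).mpr (hdvd_each i)
      push_cast at h0 ⊢
      rw [h0, zero_add]
    rw [Finset.prod_congr rfl h1, Finset.prod_const_one, Nat.cast_one]
  have hN1 : 1 ≤ N := Finset.one_le_prod' (fun i _ => by omega)
  have hanN : a * n ∣ N - 1 :=
    (Nat.modEq_iff_dvd' hN1).mp ((ZMod.natCast_eq_natCast_iff _ _ _).mp hNmod.symm)
  -- prime factors of totient are prime factors of a * n
  have htotpos : 0 < Nat.totient N := by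
    rw [htot]
    exact Finset.prod_pos (fun i _ => by positivity)
  have hsub : (Nat.totient N).primeFactors ⊆ (a * n).primeFactors := by
    intro q hq
    rw [Nat.mem_primeFactors] at hq ⊢
    obtain ⟨hqp, hqdvd, -⟩ := hq
    refine ⟨hqp, ?_, han.ne'⟩
    rw [htot] at hqdvd
    obtain ⟨i, -, hqi⟩ := hqp.prime.exists_mem_finset_dvd hqdvd
    rcases (Nat.Prime.dvd_mul hqp).mp hqi with h | h
    · exact Dvd.dvd.mul_right (hqp.dvd_of_dvd_pow h) n
    · exact Dvd.dvd.mul_left h a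
  calc rad (Nat.totient N) ∣ rad (a * n) :=
        Finset.prod_dvd_prod_of_subset _ _ _ hsub
    _ ∣ a * n := Nat.prod_primeFactors_dvd _
    _ ∣ N - 1 := hanN
end

section
/- Let a ≥ 2 and n ≥ 1 be natural numbers, let m ≥ 2, and let l_1 < l_2 < ... < l_m be positive integers such that the numbers p_i = a^{l_i} n + 1 are (distinct) primes for i = 1, ..., m. Then N = p_1 p_2 ⋯ p_m is not a Carmichael number; that is, there exists an integer c with c^N ≢ c (mod N). -/
/-!
Let `p₀ < p₁ < ⋯` be the primes `a ^ lᵢ * n + 1`. If `N = ∏ pᵢ` were Carmichael, then by the easy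
direction of Korselt's criterion `p₁ - 1 = n * a ^ l₁` would divide `N - 1`. But modulo
`n * a ^ (2 l₀)` the product expands to `N ≡ 1 + n * ∑ a ^ lᵢ`, so `n * a ^ (l₀ + 1)` would divide
`n * ∑ a ^ lᵢ`, which is impossible since the exponent `l₀` occurs exactly once in the sum.
-/

theorem mul_sq_dvd_prod_one_add_mul_sub {R ι : Type*} [CommRing R] (s : Finset ι) (n B : R)
    (b : ι → R) (hb : ∀ i ∈ s, B ∣ b i) :
    n * B ^ 2 ∣ ∏ i ∈ s, (1 + n * b i) - (1 + n * ∑ i ∈ s, b i) := by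
  induction s using Finset.cons_induction with
  | empty => simp
  | cons j s _ ih =>
    rw [Finset.prod_cons, Finset.sum_cons]
    have hs := ih fun i hi => hb i (Finset.mem_cons_of_mem hi)
    obtain ⟨x, hx⟩ := hb j (Finset.mem_cons_self j s)
    obtain ⟨y, hy⟩ := Finset.dvd_sum fun i hi => hb i (Finset.mem_cons_of_mem hi)
    have hcross : n * B ^ 2 ∣ n * b j * (n * ∑ i ∈ s, b i) := ⟨x * y * n, by rw [hx, hy]; ring⟩
    convert (hs.mul_left (1 + n * b j)).add hcross using 1
    ring

theorem not_pow_succ_dvd_sum_pow {R ι : Type*} [CommRing R] [IsDomain R] {a : R}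
    (ha : ¬IsUnit a) (ha₀ : a ≠ 0) {s : Finset ι} {e : ι → ℕ} {i₀ : ι} (hi₀ : i₀ ∈ s)
    (he : ∀ i ∈ s, i ≠ i₀ → e i₀ < e i) :
    ¬a ^ (e i₀ + 1) ∣ ∑ i ∈ s, a ^ e i := by
  classical
  intro h
  have hrest : a ^ (e i₀ + 1) ∣ ∑ i ∈ s.erase i₀, a ^ e i :=
    Finset.dvd_sum fun i hi =>
      pow_dvd_pow a (he i (Finset.mem_of_mem_erase hi) (Finset.ne_of_mem_erase hi))
  rw [← Finset.add_sum_erase s _ hi₀, dvd_add_left hrest, pow_dvd_pow_iff ha₀ ha] at h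
  omega

theorem not_mul_pow_dvd_prod_one_add_mul_pow_sub_one {R ι : Type*} [CommRing R] [IsDomain R]
    {a n : R} (ha : ¬IsUnit a) (ha₀ : a ≠ 0) (hn : n ≠ 0) {s : Finset ι} {e : ι → ℕ} {i₀ : ι}
    (hi₀ : i₀ ∈ s) (he : ∀ i ∈ s, i ≠ i₀ → e i₀ < e i) (he₀ : 1 ≤ e i₀) {k : ℕ} (hk : e i₀ < k) :
    ¬n * a ^ k ∣ ∏ i ∈ s, (1 + n * a ^ e i) - 1 := by
  intro h
  have hk' : n * a ^ (e i₀ + 1) ∣ ∏ i ∈ s, (1 + n * a ^ e i) - 1 :=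
    (mul_dvd_mul_left n (pow_dvd_pow a hk)).trans h
  have hexpand : n * a ^ (e i₀ + 1) ∣ ∏ i ∈ s, (1 + n * a ^ e i) - (1 + n * ∑ i ∈ s, a ^ e i) := by
    refine (mul_dvd_mul_left n ?_).trans
      (mul_sq_dvd_prod_one_add_mul_sub s n (a ^ e i₀) (fun i => a ^ e i) fun i hi => ?_)
    · rw [← pow_mul]
      exact pow_dvd_pow a (by omega)
    · by_cases hi' : i = i₀
      · rw [hi']
      · exact pow_dvd_pow a (he i hi hi').le
  have hsum := dvd_sub hk' hexpand
  rw [sub_sub_sub_cancel_left, add_sub_cancel_left, mul_dvd_mul_iff_left hn] at hsum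
  exact not_pow_succ_dvd_sum_pow ha ha₀ hi₀ he hsum

theorem card_sub_one_dvd_sub_one_of_forall_pow_eq_self {K : Type*} [Field K] [Finite K] {N : ℕ}
    (hN : N ≠ 0) (h : ∀ x : K, x ^ N = x) : Nat.card K - 1 ∣ N - 1 := by
  rw [← Nat.card_units, ← IsCyclic.exponent_eq_card]
  refine Monoid.exponent_dvd_of_forall_pow_eq_one fun u => ?_
  rw [← mul_eq_right, pow_sub_one_mul hN]
  exact Units.ext (by rw [Units.val_pow_eq_pow_val, h])

theorem Nat.Prime.sub_one_dvd_sub_one_of_forall_pow_modEq {p N : ℕ} (hp : p.Prime) (hpN : p ∣ N)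
    (hN : N ≠ 0) (h : ∀ c : ℤ, c ^ N ≡ c [ZMOD N]) : p - 1 ∣ N - 1 := by
  have := Fact.mk hp
  rw [← Nat.card_zmod p]
  refine card_sub_one_dvd_sub_one_of_forall_pow_eq_self hN fun x => ?_
  obtain ⟨c, rfl⟩ := ZMod.intCast_surjective x
  have hc := (h c).of_dvd (Int.natCast_dvd_natCast.mpr hpN)
  rw [← ZMod.intCast_eq_intCast_iff] at hc
  push_cast at hc
  exact hc

/-- If `p i = a ^ (l i) * n + 1` are primes with `l` strictly increasing and positive
(`a ≥ 2`, `n ≥ 1`, `m ≥ 2`), then `N = ∏ p i` is not a Carmichael number: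
some integer `c` satisfies `c ^ N ≢ c (mod N)`. -/
theorem not_carmichael_of_tuple (a n m : ℕ) (ha : 2 ≤ a) (hn : 1 ≤ n) (hm : 2 ≤ m)
    (l : Fin m → ℕ) (hl : ∀ i, 1 ≤ l i) (hmono : StrictMono l)
    (hprime : ∀ i, Nat.Prime (a ^ l i * n + 1)) :
    ∃ c : ℤ, ¬ (c ^ (∏ i, (a ^ l i * n + 1)) ≡ c [ZMOD ((∏ i, (a ^ l i * n + 1) : ℕ) : ℤ)]) := by
  obtain ⟨k, rfl⟩ : ∃ k, m = k + 2 := ⟨m - 2, by omega⟩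
  by_contra! hcarm
  have hN : 1 ≤ ∏ i, (a ^ l i * n + 1) := Finset.one_le_prod' fun i _ => Nat.le_add_left 1 _
  have hdvd := (hprime 1).sub_one_dvd_sub_one_of_forall_pow_modEq
    (Finset.dvd_prod_of_mem (fun i => a ^ l i * n + 1) (Finset.mem_univ 1))
    (Nat.one_le_iff_ne_zero.mp hN) hcarm
  rw [Nat.add_sub_cancel, ← Int.natCast_dvd_natCast, Nat.cast_sub hN] at hdvd
  push_cast at hdvd
  refine not_mul_pow_dvd_prod_one_add_mul_pow_sub_one (a := (a : ℤ)) (n := (n : ℤ))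
    (by rw [Int.isUnit_iff]; omega) (by omega) (by omega) (Finset.mem_univ 0)
    (fun i _ hi => hmono (Fin.pos_of_ne_zero hi)) (hl 0) (hmono Fin.zero_lt_one) ?_
  simpa only [mul_comm, add_comm] using hdvd
end

section
/- Let a ≥ 2 and n ≥ 1 be natural numbers, let m ≥ 2, and let l_1 < l_2 < ... < l_m be positive integers such that the numbers p_i = a^{l_i} n + 1 are (distinct) primes for i = 1, ..., m, and set N = p_1 p_2 ⋯ p_m. Then a^{l_2}·n does not divide N − 1; in particular, p_2 − 1 does not divide N − 1, so N fails Korselt's criterion. -/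
/-!
Write `p i = a ^ l i * n + 1` and `M = a ^ l 1 * n`. Every `p i` with `i ≠ 0` has
`l i ≥ l 1`, so `p i ≡ 1 [MOD M]`, and the product collapses to `N ≡ p 0 [MOD M]`.
Hence `N - 1 ≡ a ^ l 0 * n`, a positive residue smaller than `M`, so `M ∤ N - 1`.
-/

theorem Nat.not_dvd_sub_one_of_modEq_add_one {N x M : ℕ} (hN : 1 ≤ N) (hx : 0 < x) (hxM : x < M)
    (h : N ≡ x + 1 [MOD M]) : ¬ M ∣ N - 1 := by
  intro hdvd
  have h1 : 0 + 1 ≡ x + 1 [MOD M] := ((Nat.modEq_iff_dvd' hN).2 hdvd).trans h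
  have hMx : M ∣ x := Nat.modEq_zero_iff_dvd.1 (Nat.ModEq.add_right_cancel' 1 h1).symm
  exact hx.ne' (Nat.eq_zero_of_dvd_of_lt hMx hxM)

theorem fails_korselt_of_tuple_general (a n m : ℕ) (ha : 2 ≤ a) (hn : 1 ≤ n) (hm : 2 ≤ m)
    (l : Fin m → ℕ) (hmono : StrictMono l) :
    ¬ (a ^ l ⟨1, hm⟩ * n ∣ (∏ i, (a ^ l i * n + 1)) - 1) ∧
    ¬ ((a ^ l ⟨1, hm⟩ * n + 1) - 1 ∣ (∏ i, (a ^ l i * n + 1)) - 1) := by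
  set i₀ : Fin m := ⟨0, by omega⟩
  set i₁ : Fin m := ⟨1, hm⟩
  have hfactor : ∀ i, i ≠ i₀ → a ^ l i * n + 1 ≡ 1 [MOD a ^ l i₁ * n] := by
    intro i hi
    have hle : i₁ ≤ i := Fin.le_iff_val_le_val.2 (Nat.one_le_iff_ne_zero.2 (Fin.val_ne_iff.2 hi))
    have hdvd := Nat.mul_dvd_mul_right (pow_dvd_pow a (hmono.monotone hle)) n
    exact (Nat.modEq_zero_iff_dvd.2 hdvd).add_right 1
  have hprod : ∏ i, (a ^ l i * n + 1) ≡ a ^ l i₀ * n + 1 [MOD a ^ l i₁ * n] :=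
    Nat.prod_modEq_single (by simp) (fun i _ hi => hfactor i hi)
  have hlt : a ^ l i₀ * n < a ^ l i₁ * n :=
    have hl : l i₀ < l i₁ := hmono (by simp [i₀, i₁, Fin.lt_def])
    Nat.mul_lt_mul_of_pos_right (Nat.pow_lt_pow_right ha hl) hn
  have key : ¬ a ^ l i₁ * n ∣ (∏ i, (a ^ l i * n + 1)) - 1 :=
    Nat.not_dvd_sub_one_of_modEq_add_one (Finset.one_le_prod' fun i _ => Nat.le_add_left 1 _)
      (by positivity) hlt hprod
  exact ⟨key, by simpa using key⟩

/-- If `p i = a ^ (l i) * n + 1` are primes with `l` strictly increasing and positive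
(`a ≥ 2`, `n ≥ 1`, `m ≥ 2`) and `N = ∏ p i`, then `a ^ (l 1) * n ∤ N - 1`;
in particular `p 1 - 1 = a ^ (l 1) * n` does not divide `N - 1`, so `N` fails
Korselt's criterion. -/
theorem fails_korselt_of_tuple (a n m : ℕ) (ha : 2 ≤ a) (hn : 1 ≤ n) (hm : 2 ≤ m)
    (l : Fin m → ℕ) (hl : ∀ i, 1 ≤ l i) (hmono : StrictMono l)
    (hprime : ∀ i, Nat.Prime (a ^ l i * n + 1)) :
    ¬ (a ^ l ⟨1, hm⟩ * n ∣ (∏ i, (a ^ l i * n + 1)) - 1) ∧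
    ¬ ((a ^ l ⟨1, hm⟩ * n + 1) - 1 ∣ (∏ i, (a ^ l i * n + 1)) - 1) :=
  fails_korselt_of_tuple_general a n m ha hn hm l hmono
end

section
/- Let a ≥ 2 and n ≥ 1 be natural numbers, let m ≥ 1, and let c_1 < c_2 < ... < c_m be positive integers with c_1 + c_2 + ⋯ + c_m ≤ (m + 1)·c_1, such that the numbers p_i = a^{c_i} n + 1 are (distinct) primes for i = 1, ..., m. Then for N = p_1 p_2 ⋯ p_m, the number φ(N) divides (N − 1)^{m+1}. -/
/-!
Put `d = a ^ c₁ * n`. Since `c` is increasing, `d` divides every `pᵢ - 1 = a ^ cᵢ * n`, so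
`N ≡ 1 [MOD d]`. The `pᵢ` are distinct primes, so `φ N = ∏ (pᵢ - 1) = a ^ (∑ cᵢ) * n ^ m`, and
`∑ cᵢ ≤ (m + 1) * c₁` makes this a divisor of `d ^ (m + 1)`, hence of `(N - 1) ^ (m + 1)`.
-/

open Finset Function Nat

theorem Nat.totient_prod_of_pairwise_coprime {ι : Type*} (s : Finset ι) (f : ι → ℕ)
    (h : (s : Set ι).Pairwise (Nat.Coprime on f)) :
    φ (∏ i ∈ s, f i) = ∏ i ∈ s, φ (f i) := by
  induction s using Finset.cons_induction with
  | empty => simp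
  | cons i s hi ih =>
    have hcop : Nat.Coprime (f i) (∏ j ∈ s, f j) := Nat.Coprime.prod_right fun j hj =>
      h (mem_cons_self i s) (mem_cons_of_mem hj) fun hij => hi (hij ▸ hj)
    rw [prod_cons, prod_cons, Nat.totient_mul hcop, ih (h.mono (by simp))]

theorem Nat.totient_prod_of_prime {ι : Type*} (s : Finset ι) {p : ι → ℕ}
    (hp : ∀ i ∈ s, (p i).Prime) (hinj : Set.InjOn p s) :
    φ (∏ i ∈ s, p i) = ∏ i ∈ s, (p i - 1) := by
  rw [Nat.totient_prod_of_pairwise_coprime s p fun i hi j hj hij =>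
    (Nat.coprime_primes (hp i hi) (hp j hj)).mpr fun h => hij (hinj hi hj h)]
  exact prod_congr rfl fun i hi => Nat.totient_prime (hp i hi)

theorem Nat.dvd_prod_sub_one {ι : Type*} (s : Finset ι) {f : ι → ℕ} {d : ℕ}
    (h : ∀ i ∈ s, f i ≡ 1 [MOD d]) : d ∣ ∏ i ∈ s, f i - 1 :=
  Nat.dvd_of_mod_eq_zero (Nat.sub_mod_eq_zero_of_mod_eq (Nat.ModEq.prod_one h))

theorem totient_dvd_pow_succ_of_tuple_general (a n m : ℕ) (ha : 2 ≤ a) (hn : 1 ≤ n) (hm : 1 ≤ m)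
    (c : Fin m → ℕ) (hmono : StrictMono c)
    (hsum : ∑ i, c i ≤ (m + 1) * c ⟨0, hm⟩)
    (hprime : ∀ i, Nat.Prime (a ^ c i * n + 1)) :
    Nat.totient (∏ i, (a ^ c i * n + 1)) ∣ ((∏ i, (a ^ c i * n + 1)) - 1) ^ (m + 1) := by
  set d := a ^ c ⟨0, hm⟩ * n
  have hinj : Function.Injective fun i => a ^ c i * n + 1 := fun i j hij =>
    hmono.injective <| Nat.pow_right_injective ha <|
      Nat.eq_of_mul_eq_mul_right hn (Nat.add_right_cancel hij)
  have htot : φ (∏ i, (a ^ c i * n + 1)) = a ^ (∑ i, c i) * n ^ m := by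
    rw [Nat.totient_prod_of_prime _ (fun i _ => hprime i) hinj.injOn]
    simp only [Nat.add_sub_cancel, prod_mul_distrib, prod_pow_eq_pow_sum, prod_const,
      Finset.card_fin]
  have hdN : d ∣ ∏ i, (a ^ c i * n + 1) - 1 := Nat.dvd_prod_sub_one _ fun i _ =>
    (Nat.modEq_zero_iff_dvd.mpr <| Nat.mul_dvd_mul_right
      (Nat.pow_dvd_pow a (hmono.monotone (Fin.le_def.mpr (Nat.zero_le _)))) n).add_right 1
  rw [htot]
  calc a ^ (∑ i, c i) * n ^ m ∣ a ^ ((m + 1) * c ⟨0, hm⟩) * n ^ (m + 1) :=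
        mul_dvd_mul (Nat.pow_dvd_pow a hsum) (Nat.pow_dvd_pow n m.le_succ)
    _ = d ^ (m + 1) := by rw [mul_pow, ← pow_mul, mul_comm (c _)]
    _ ∣ _ := pow_dvd_pow_of_dvd hdN _

/-- If `p i = a ^ (c i) * n + 1` are primes with `c` strictly increasing and positive
(`a ≥ 2`, `n ≥ 1`, `m ≥ 1`) and `∑ c i ≤ (m + 1) * c 0`, then for `N = ∏ p i`
we have `φ N ∣ (N - 1) ^ (m + 1)`. -/
theorem totient_dvd_pow_succ_of_tuple (a n m : ℕ) (ha : 2 ≤ a) (hn : 1 ≤ n) (hm : 1 ≤ m)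
    (c : Fin m → ℕ) (hc : ∀ i, 1 ≤ c i) (hmono : StrictMono c)
    (hsum : ∑ i, c i ≤ (m + 1) * c ⟨0, hm⟩)
    (hprime : ∀ i, Nat.Prime (a ^ c i * n + 1)) :
    Nat.totient (∏ i, (a ^ c i * n + 1)) ∣ ((∏ i, (a ^ c i * n + 1)) - 1) ^ (m + 1) :=
  totient_dvd_pow_succ_of_tuple_general a n m ha hn hm c hmono hsum hprime
end

section
/- Every Carmichael number is a radimichael number: if n is a composite natural number such that a^n ≡ a (mod n) for every integer a, then rad(φ(n)) divides n − 1. -/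
/-- Every Carmichael number is a radimichael number: if `n` is composite and
`a ^ n ≡ a (mod n)` for all integers `a`, then `rad (φ n) ∣ n - 1`. -/
theorem radimichael_of_carmichael (n : ℕ) (hn : 1 < n) (hcomp : ¬ n.Prime)
    (hcar : ∀ a : ℤ, a ^ n ≡ a [ZMOD (n : ℤ)]) :
    rad (Nat.totient n) ∣ n - 1 := by
  have hn0 : n ≠ 0 := by omega
  -- n is squarefree
  have hsq : Squarefree n := by
    rw [Nat.squarefree_iff_prime_squarefree]
    intro p pp hdvd
    have h := hcar (p : ℤ)
    have h1 : (n : ℤ) ∣ (p : ℤ) ^ n - p := Int.ModEq.dvd h.symm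
    have h2 : ((p * p : ℕ) : ℤ) ∣ (p : ℤ) ^ n - p := dvd_trans (Int.natCast_dvd_natCast.mpr hdvd) h1
    have h3 : ((p : ℤ) * p) ∣ (p : ℤ) ^ n := by
      push_cast at h2 ⊢
      calc (p:ℤ) * p ∣ (p:ℤ) ^ 2 := by rw [sq]
        _ ∣ (p:ℤ) ^ n := pow_dvd_pow _ (by omega)
    have h4 : ((p : ℤ) * p) ∣ (p : ℤ) := by
      have := dvd_sub h3 (by push_cast at h2 ⊢; exact h2)
      simpa using this
    have hp2 : 2 ≤ p := pp.two_le
    have := Int.le_of_dvd (by positivity) h4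
    nlinarith
  -- for every prime p dividing n, p - 1 divides n - 1
  have hkey : ∀ p : ℕ, p.Prime → p ∣ n → (p - 1) ∣ (n - 1) := by
    intro p pp hpn
    haveI : Fact p.Prime := ⟨pp⟩
    obtain ⟨u, hu⟩ := IsCyclic.exists_generator (α := (ZMod p)ˣ)
    have horder : orderOf u = p - 1 := by
      rw [orderOf_eq_card_of_forall_mem_zpowers hu, Nat.card_eq_fintype_card, ZMod.card_units_eq_totient,
        Nat.totient_prime pp]
    set a : ℤ := ((u : ZMod p).val : ℤ) with ha
    have h := hcar a
    have h1 : a ^ n ≡ a [ZMOD (p : ℤ)] :=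
      Int.ModEq.of_dvd (Int.natCast_dvd_natCast.mpr hpn) h
    have h2 : ((a : ZMod p)) ^ n = (a : ZMod p) := by
      have := (ZMod.intCast_eq_intCast_iff _ _ _).mpr h1
      push_cast at this
      exact this
    have ha' : (a : ZMod p) = (u : ZMod p) := by
      rw [ha]
      push_cast
      simp [ZMod.natCast_val, ZMod.cast_id]
    rw [ha'] at h2
    have h3 : u ^ n = u := Units.ext (by push_cast; exact h2)
    have h4 : u ^ (n - 1) = 1 := by
      have hn1 : n - 1 + 1 = n := by omega
      have : u ^ (n - 1) * u = u := by
        rw [← pow_succ, hn1, h3]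
      exact mul_right_cancel (by rw [this, one_mul])
    have := orderOf_dvd_of_pow_eq_one h4
    rwa [horder] at this
  -- totient as product of (p - 1)
  have htot : Nat.totient n = ∏ p ∈ n.primeFactors, (p - 1) := by
    rw [Nat.totient_eq_prod_factorization hn0, Nat.prod_factorization_eq_prod_primeFactors]
    apply Finset.prod_congr rfl
    intro p hp
    have pp := Nat.prime_of_mem_primeFactors hp
    have h1 : n.factorization p = 1 :=
      Nat.factorization_eq_one_of_squarefree hsq pp (Nat.dvd_of_mem_primeFactors hp)
    rw [h1]
    simp
  -- every prime q dividing φ(n) divides n - 1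
  have hq : ∀ q ∈ (Nat.totient n).primeFactors, q ∣ n - 1 := by
    intro q hq
    have qp := Nat.prime_of_mem_primeFactors hq
    have hqd : q ∣ Nat.totient n := Nat.dvd_of_mem_primeFactors hq
    rw [htot] at hqd
    obtain ⟨p, hp, hqp⟩ := (Nat.Prime.prime qp).exists_mem_finset_dvd hqd
    exact dvd_trans hqp (hkey p (Nat.prime_of_mem_primeFactors hp)
      (Nat.dvd_of_mem_primeFactors hp))
  exact Finset.prod_primes_dvd _
    (fun q hq' => (Nat.prime_of_mem_primeFactors hq').prime) hq
end
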